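/- Let q be a self-join-free Boolean conjunctive query, G an atom and y a variable with G attacks y and FD(q) ⊭ key(G) → y. If FD(q) ⊨ x → y, then G attacks x. -/

import Mathlib

/-- A fact `R(a₁,…,aₙ)`: relation name, primary-key values, non-key values. -/
structure DBFact where
  rel : ℕ
  key : List ℕ
  rest : List ℕ
deriving DecidableEq

/-- Two facts are key-equal if they have the same relation name and primary-key value. -/
def keyEq (A B : DBFact) : Prop := A.rel = B.rel ∧ A.key = B.key

instance (A B : DBFact) : Decidable (keyEq A B) :=
  inferInstanceAs (Decidable (_ ∧ _))

/-- A set of facts is consistent if it contains no two distinct key-equal facts. -/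
def Consistent (s : Finset DBFact) : Prop := ∀ A ∈ s, ∀ B ∈ s, keyEq A B → A = B

/-- A repair of `db` is a maximal (w.r.t. ⊆) consistent subset of `db`. -/
def Repair (db r : Finset DBFact) : Prop :=
  r ⊆ db ∧ Consistent r ∧ ∀ r', r' ⊆ db → Consistent r' → r ⊆ r' → r = r'

/-- A term is a variable (inl) or a constant (inr). -/
abbrev Term := ℕ ⊕ ℕ

/-- An atom `R(t₁,…,tₙ)` with key positions and non-key positions. -/
structure Atom where
  rel : ℕ
  key : List Term
  rest : List Term
deriving DecidableEq

def termVars (l : List Term) : Finset ℕ := (l.filterMap fun t => t.getLeft?).toFinset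

/-- Variables at primary-key positions of an atom. -/
def keyVars (F : Atom) : Finset ℕ := termVars F.key

/-- All variables of an atom. -/
def atomVars (F : Atom) : Finset ℕ := termVars F.key ∪ termVars F.rest

/-- A query (finite set of atoms) is self-join-free: no relation name occurs twice. -/
def SJF (q : Finset Atom) : Prop := ∀ F ∈ q, ∀ G ∈ q, F.rel = G.rel → F = G

/-- Apply a valuation (total map from variables to constants) to an atom, yielding a fact. -/
def applyVal (θ : ℕ → ℕ) (F : Atom) : DBFact :=
  ⟨F.rel, F.key.map (Sum.elim θ id), F.rest.map (Sum.elim θ id)⟩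

/-- Semantic implication of a functional dependency `X → Y` by a set of FDs
(two-tuple semantics, which is equivalent to the standard one for FDs). -/
def FDImplies (fds : Set (Set ℕ × Set ℕ)) (X Y : Set ℕ) : Prop :=
  ∀ θ μ : ℕ → ℕ,
    (∀ p ∈ fds, (∀ v ∈ p.1, θ v = μ v) → ∀ v ∈ p.2, θ v = μ v) →
    (∀ v ∈ X, θ v = μ v) → ∀ v ∈ Y, θ v = μ v

/-- `FD(q) = { key(F) → vars(F) : F ∈ q }`. -/
def FDs (q : Finset Atom) : Set (Set ℕ × Set ℕ) :=
  {p | ∃ F ∈ q, p = ((keyVars F : Set ℕ), (atomVars F : Set ℕ))}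

/-- `F⁺ = { x : FD(q \ {F}) ⊨ key(F) → x }`. -/
def plus (q : Finset Atom) (F : Atom) : Set ℕ :=
  {x | FDImplies (FDs (q.erase F)) (keyVars F : Set ℕ) {x}}

/-- One step of a witness for an attack by `F`: consecutive atoms share a variable outside `F⁺`. -/
def AttackStep (q : Finset Atom) (F : Atom) (A B : Atom) : Prop :=
  ¬ ((atomVars A ∩ atomVars B : Finset ℕ) : Set ℕ) ⊆ plus q F

/-- `F` attacks `G` in the attack graph of `q`. -/
def Attacks (q : Finset Atom) (F G : Atom) : Prop :=
  F ≠ G ∧ F ∈ q ∧ ∃ L : List Atom, (∀ A ∈ L, A ∈ q) ∧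
    List.Chain (AttackStep q F) F L ∧ (F :: L).getLast (List.cons_ne_nil F L) = G

/-- `F` attacks the variable `z`. -/
def AttacksVar (q : Finset Atom) (F : Atom) (z : ℕ) : Prop :=
  z ∉ plus q F ∧ F ∈ q ∧ ∃ L : List Atom, (∀ A ∈ L, A ∈ q) ∧
    List.Chain (AttackStep q F) F L ∧ z ∈ atomVars ((F :: L).getLast (List.cons_ne_nil F L))

/-- `r ⊨ ζ(q)` for a valuation `ζ` over the variable set `X`. -/
def Sat (r : Finset DBFact) (q : Finset Atom) (X : Finset ℕ) (ζ : ℕ → ℕ) : Prop :=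
  ∃ θ : ℕ → ℕ, (∀ v ∈ X, θ v = ζ v) ∧ ∀ F ∈ q, applyVal θ F ∈ r

/-- `r ⊨ q`. -/
def Sat0 (r : Finset DBFact) (q : Finset Atom) : Prop :=
  ∃ θ : ℕ → ℕ, ∀ F ∈ q, applyVal θ F ∈ r

/-- A fact `A` is relevant for `q` in `r` if `A ∈ θ(q) ⊆ r` for some valuation `θ`. -/
def Relevant (A : DBFact) (q : Finset Atom) (r : Finset DBFact) : Prop :=
  ∃ θ : ℕ → ℕ, (∃ F ∈ q, applyVal θ F = A) ∧ ∀ F ∈ q, applyVal θ F ∈ r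

/-! Every variable derivable from `x` under `FD(q)` is reached from `x` by repeatedly applying
some atom's dependency `key(F) → vars(F)`. Walk such a derivation of `y` backwards: if `G`
attacks `u ∈ vars(F)` and `FD(q) ⊭ key(G) → u`, then some `w ∈ key(F)` also escapes `key(G)`,
hence lies outside `G⁺`, and appending `F` to the attack witness for `u` shows that `G` attacks
`w`. The descent ends at `x`. -/

inductive FDClosure (q : Finset Atom) (X : Set ℕ) : ℕ → Prop
  | base {v : ℕ} : v ∈ X → FDClosure q X v
  | step {F : Atom} {v : ℕ} : F ∈ q → (∀ w ∈ keyVars F, FDClosure q X w) → v ∈ atomVars F →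
      FDClosure q X v

namespace FDImplies

variable {fds : Set (Set ℕ × Set ℕ)} {X Y : Set ℕ}

theorem mono {fds' : Set (Set ℕ × Set ℕ)} (hsub : fds ⊆ fds') (h : FDImplies fds X Y) :
    FDImplies fds' X Y :=
  fun θ μ hfds => h θ μ fun p hp => hfds p (hsub hp)

theorem trans {u : ℕ} (h₁ : ∀ w ∈ Y, FDImplies fds X {w}) (h₂ : FDImplies fds Y {u}) :
    FDImplies fds X {u} :=
  fun θ μ hfds hX => h₂ θ μ hfds fun w hw => h₁ w hw θ μ hfds hX w rfl

end FDImplies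

theorem FDs_erase_subset (q : Finset Atom) (G : Atom) : FDs (q.erase G) ⊆ FDs q := by
  rintro p ⟨F, hF, rfl⟩
  exact ⟨F, Finset.mem_of_mem_erase hF, rfl⟩

theorem fdImplies_keyVars_atomVars {q : Finset Atom} {F : Atom} (hF : F ∈ q) {u : ℕ}
    (hu : u ∈ atomVars F) : FDImplies (FDs q) (keyVars F : Set ℕ) {u} := by
  rintro θ μ hfds hkey v rfl
  exact hfds _ ⟨F, hF, rfl⟩ hkey v hu

/-- Completeness of `FDClosure`: the two tuples `id` and `v ↦ v + [v ∉ closure]` agree exactly on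
the closure and satisfy every dependency of `q`. -/
theorem FDClosure.of_fdImplies {q : Finset Atom} {X : Set ℕ} {y : ℕ}
    (h : FDImplies (FDs q) X {y}) : FDClosure q X y := by
  classical
  let μ : ℕ → ℕ := fun v => if FDClosure q X v then v else v + 1
  have of_eq : ∀ v, id v = μ v → FDClosure q X v := by
    intro v hv
    by_contra hc
    simp only [μ, hc, if_false, id] at hv
    omega
  have hfds : ∀ p ∈ FDs q, (∀ v ∈ p.1, id v = μ v) → ∀ v ∈ p.2, id v = μ v := by
    rintro p ⟨F, hF, rfl⟩ hkey v hv
    simp [μ, FDClosure.step hF (fun w hw => of_eq w (hkey w hw)) hv]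
  have hX : ∀ v ∈ X, id v = μ v := fun v hv => by simp [μ, FDClosure.base hv]
  exact of_eq y (h id μ hfds hX y rfl)

theorem notMem_plus_of_not_fdImplies {q : Finset Atom} {G : Atom} {u : ℕ}
    (h : ¬ FDImplies (FDs q) (keyVars G : Set ℕ) {u}) : u ∉ plus q G :=
  fun hu => h (hu.mono (FDs_erase_subset q G))

theorem exists_mem_keyVars_not_fdImplies {q : Finset Atom} {F : Atom} (hF : F ∈ q)
    {X : Set ℕ} {u : ℕ} (hu : u ∈ atomVars F) (h : ¬ FDImplies (FDs q) X {u}) :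
    ∃ w ∈ keyVars F, ¬ FDImplies (FDs q) X {w} := by
  by_contra! hall
  exact h (FDImplies.trans hall (fdImplies_keyVars_atomVars hF hu))

set_option linter.deprecated false in
theorem List.Chain.append_singleton {α : Type*} {R : α → α → Prop} {a b : α} {l : List α}
    (h : List.Chain R a l) (hb : R ((a :: l).getLast (List.cons_ne_nil a l)) b) :
    List.Chain R a (l ++ [b]) :=
  List.IsChain.append (l₁ := a :: l) h (.singleton b) (by simpa [List.getLast?_eq_getLast])

set_option linter.deprecated false in
theorem AttacksVar.of_mem_atomVars {q : Finset Atom} {G F : Atom} {u w : ℕ}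
    (hatt : AttacksVar q G u) (hF : F ∈ q) (hu : u ∈ atomVars F) (hw : w ∈ atomVars F)
    (hwG : w ∉ plus q G) : AttacksVar q G w := by
  obtain ⟨huG, hG, L, hLq, hchain, hlast⟩ := hatt
  refine ⟨hwG, hG, L ++ [F], List.forall_mem_append.mpr ⟨hLq, List.forall_mem_singleton.mpr hF⟩,
    hchain.append_singleton ?_, ?_⟩
  · exact fun hsub => huG (hsub (by simp [hlast, hu]))
  · simpa [List.getLast_append_singleton] using hw

theorem AttacksVar.exists_mem_of_fdClosure {q : Finset Atom} {G : Atom} {X : Set ℕ} {u : ℕ}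
    (hu : FDClosure q X u) (hatt : AttacksVar q G u)
    (hnimp : ¬ FDImplies (FDs q) (keyVars G : Set ℕ) {u}) : ∃ v ∈ X, AttacksVar q G v := by
  induction hu with
  | base hv => exact ⟨_, hv, hatt⟩
  | step hF _ hu ih =>
    obtain ⟨w, hwF, hnw⟩ := exists_mem_keyVars_not_fdImplies hF hu hnimp
    exact ih w hwF (hatt.of_mem_atomVars hF hu (Finset.mem_union_left _ hwF)
      (notMem_plus_of_not_fdImplies hnw)) hnw

theorem attack_transitivity_var_general (q : Finset Atom) (G : Atom)
    (x y : ℕ) (hatt : AttacksVar q G y)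
    (hnimp : ¬ FDImplies (FDs q) (keyVars G : Set ℕ) {y})
    (himp : FDImplies (FDs q) {x} {y}) :
    AttacksVar q G x := by
  simpa using hatt.exists_mem_of_fdClosure (FDClosure.of_fdImplies himp) hnimp

/-- If `G` attacks `y`, `FD(q) ⊭ key(G) → y`, and `FD(q) ⊨ x → y`, then `G` attacks `x`. -/
theorem attack_transitivity_var (q : Finset Atom) (hq : SJF q) (G : Atom) (hG : G ∈ q)
    (x y : ℕ) (hatt : AttacksVar q G y)
    (hnimp : ¬ FDImplies (FDs q) (keyVars G : Set ℕ) {y})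
    (himp : FDImplies (FDs q) {x} {y}) :
    AttacksVar q G x :=
  attack_transitivity_var_general q G x y hatt hnimp himp
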